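/- Let R be a Hausdorff local topological ring in which R^× is open in R, is a topological group in its subspace topology, and is closed in R (e.g., R a valuation ring with its valuation topology), and fix a topologization of rational points over R. Then for every quasi-separated, locally of finite type R-scheme X, the topological space X(R) is Hausdorff. -/

import Mathlib

open AlgebraicGeometry CategoryTheory CategoryTheory.Limits Topology

noncomputable section

/-- `Spec R`, as a scheme, for a commutative ring `R`. -/
abbrev SpecR (R : Type) [CommRing R] : Scheme := Spec (CommRingCat.of R)

/-- The set of `R`-points of a scheme `X` over `Spec R` with structure morphism `f`,
i.e. the set of sections of `f`. -/
def Pts {R : Type} [CommRing R] {X : Scheme} (f : X ⟶ SpecR R) : Type :=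
  { s : SpecR R ⟶ X // s ≫ f = 𝟙 (SpecR R) }

/-- The map on `R`-points induced by a morphism `g` of schemes over `Spec R`. -/
def Pts.map {R : Type} [CommRing R] {X X' : Scheme} {f : X ⟶ SpecR R} {f' : X' ⟶ SpecR R}
    (g : X ⟶ X') (w : g ≫ f' = f) (s : Pts f) : Pts f' :=
  ⟨s.1 ≫ g, by rw [Category.assoc, w, s.2]⟩

/-- Affine `n`-space over `R`. -/
abbrev AffineN (R : Type) [CommRing R] (n : ℕ) : Scheme :=
  Spec (CommRingCat.of (MvPolynomial (Fin n) R))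

/-- The structure morphism of affine `n`-space over `R`. -/
def AffineNStr (R : Type) [CommRing R] (n : ℕ) : AffineN R n ⟶ SpecR R :=
  Spec.map (CommRingCat.ofHom (algebraMap R (MvPolynomial (Fin n) R)))

/-- The canonical identification `𝔸ⁿ(R) = Rⁿ`, sending a section to its coordinates. -/
def affineCoords (R : Type) [CommRing R] (n : ℕ) (s : Pts (AffineNStr R n)) : Fin n → R :=
  fun i => Spec.preimage s.1 (MvPolynomial.X i)

/-- A topologization of rational points over `R`: an assignment of a topology to `X(R)`
for every locally of finite type `R`-scheme `X`, satisfying (i)–(iv). -/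
structure PointsTopology (R : Type) [CommRing R] [TopologicalSpace R] : Type 1 where
  /-- the topology on `X(R)` -/
  top : ∀ {X : Scheme} (f : X ⟶ SpecR R), LocallyOfFiniteType f → TopologicalSpace (Pts f)
  /-- (i) every `R`-morphism induces a continuous map on `R`-points -/
  continuous_map : ∀ {X X' : Scheme} {f : X ⟶ SpecR R} {f' : X' ⟶ SpecR R}
      (hf : LocallyOfFiniteType f) (hf' : LocallyOfFiniteType f') (g : X ⟶ X') (w : g ≫ f' = f),
      letI := top f hf
      letI := top f' hf'
      Continuous (Pts.map g w)
  /-- (ii) the canonical bijection `𝔸ⁿ(R) = Rⁿ` is a homeomorphism -/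
  affine_homeo : ∀ (n : ℕ) (h : LocallyOfFiniteType (AffineNStr R n)),
      letI := top (AffineNStr R n) h
      IsHomeomorph (affineCoords R n)
  /-- (iii) closed immersions induce topological embeddings on `R`-points -/
  closedImmersion_isEmbedding : ∀ {X X' : Scheme} {f : X ⟶ SpecR R} {f' : X' ⟶ SpecR R}
      (hf : LocallyOfFiniteType f) (hf' : LocallyOfFiniteType f') (g : X ⟶ X')
      (w : g ≫ f' = f), IsClosedImmersion g →
      letI := top f hf
      letI := top f' hf'
      IsEmbedding (Pts.map g w)
  /-- (iv) open immersions induce open topological embeddings on `R`-points -/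
  openImmersion_isOpenEmbedding : ∀ {X X' : Scheme} {f : X ⟶ SpecR R} {f' : X' ⟶ SpecR R}
      (hf : LocallyOfFiniteType f) (hf' : LocallyOfFiniteType f') (g : X ⟶ X')
      (w : g ≫ f' = f), IsOpenImmersion g →
      letI := top f hf
      letI := top f' hf'
      IsOpenEmbedding (Pts.map g w)

/-- `R` is étale-open: étale morphisms of locally of finite type `R`-schemes
induce open maps on `R`-points. -/
def EtaleOpen {R : Type} [CommRing R] [TopologicalSpace R] (T : PointsTopology R) : Prop :=
  ∀ {X Y : Scheme} {f : X ⟶ SpecR R} {g : Y ⟶ SpecR R}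
    (hf : LocallyOfFiniteType f) (hg : LocallyOfFiniteType g) (φ : X ⟶ Y) (w : φ ≫ g = f),
    IsEtale φ →
    letI := T.top f hf
    letI := T.top g hg
    IsOpenMap (Pts.map φ w)

/-- `R` is proper-closed: proper morphisms of locally of finite type `R`-schemes
induce closed maps on `R`-points. -/
def ProperClosed {R : Type} [CommRing R] [TopologicalSpace R] (T : PointsTopology R) : Prop :=
  ∀ {X Y : Scheme} {f : X ⟶ SpecR R} {g : Y ⟶ SpecR R}
    (hf : LocallyOfFiniteType f) (hg : LocallyOfFiniteType g) (φ : X ⟶ Y) (w : φ ≫ g = f),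
    IsProper φ →
    letI := T.top f hf
    letI := T.top g hg
    IsClosedMap (Pts.map φ w)

/-- `R` is finite-closed: finite morphisms of locally of finite type `R`-schemes
induce closed maps on `R`-points. -/
def FiniteClosed {R : Type} [CommRing R] [TopologicalSpace R] (T : PointsTopology R) : Prop :=
  ∀ {X Y : Scheme} {f : X ⟶ SpecR R} {g : Y ⟶ SpecR R}
    (hf : LocallyOfFiniteType f) (hg : LocallyOfFiniteType g) (φ : X ⟶ Y) (w : φ ≫ g = f),
    IsFinite φ →
    letI := T.top f hf
    letI := T.top g hg
    IsClosedMap (Pts.map φ w)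

/-!
Let `m` be the closed point of `Spec R`. Since every point of `Spec R` specializes to `m`, a
section `s` lands in an open `U ⊆ X` as soon as `s(m) ∈ U`; hence for affine opens `U` the sets
`U(R) = {s | s(m) ∈ U}` are open and cover `X(R)`, and each is Hausdorff, being embedded in some
`Rⁿ`. Two distinct sections with `s(m), t(m)` in a common `U` are separated inside `U(R)`.
Otherwise take affine `U ∋ s(m)` and `V ∋ t(m)` with `t(m) ∉ U`. By quasi-separatedness `U ∩ V`
is quasi-compact, i.e. a finite union of basic opens `D(b₁), …, D(bₖ)` of `V`, so
`{v ∈ V(R) | v(m) ∈ U} = ⋃ᵢ {v | bᵢ(v) ∈ R^×}` is closed in `V(R)` because `R^×` is closed in `R`.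
Its complement is an open neighbourhood of `t` disjoint from `U(R)`.
-/

variable {R : Type} [CommRing R]

theorem locallyOfFiniteType_affineNStr (n : ℕ) : LocallyOfFiniteType (AffineNStr R n) := by
  rw [AffineNStr, HasRingHomProperty.Spec_iff (P := @LocallyOfFiniteType)]
  exact RingHom.finiteType_algebraMap.mpr inferInstance

theorem exists_isClosedImmersion_affineN {Y : Scheme} [IsAffine Y] (h : Y ⟶ SpecR R)
    [LocallyOfFiniteType h] :
    ∃ (n : ℕ) (g : Y ⟶ AffineN R n), IsClosedImmersion g ∧ g ≫ AffineNStr R n = h := by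
  let structureMap : R →+* Γ(Y, ⊤) :=
    h.appTop.hom.comp (Scheme.ΓSpecIso (CommRingCat.of R)).inv.hom
  let _ : Algebra R Γ(Y, ⊤) := structureMap.toAlgebra
  have : Algebra.FiniteType R Γ(Y, ⊤) := by
    refine RingHom.FiniteType.comp
      ((HasRingHomProperty.iff_of_isAffine (P := @LocallyOfFiniteType)).mp ‹_›) ?_
    exact .of_surjective _ (ConcreteCategory.bijective_of_isIso
      (Scheme.ΓSpecIso (CommRingCat.of R)).inv).2
  obtain ⟨n, φ, hφ⟩ := Algebra.FiniteType.iff_quotient_mvPolynomial''.mp this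
  have : IsClosedImmersion (Spec.map (CommRingCat.ofHom φ.toRingHom)) :=
    IsClosedImmersion.spec_of_surjective _ hφ
  refine ⟨n, Y.isoSpec.hom ≫ Spec.map (CommRingCat.ofHom φ.toRingHom), inferInstance, ?_⟩
  have hφR : CommRingCat.ofHom (algebraMap R (MvPolynomial (Fin n) R)) ≫
      CommRingCat.ofHom φ.toRingHom = (Scheme.ΓSpecIso (CommRingCat.of R)).inv ≫ h.appTop :=
    CommRingCat.hom_ext (RingHom.ext φ.commutes)
  rw [AffineNStr, Category.assoc, ← Spec.map_comp, hφR, Spec.map_comp,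
    Scheme.isoSpec_hom_naturality_assoc h, Scheme.isoSpec_Spec_hom, ← Spec.map_comp,
    Iso.inv_hom_id, Spec.map_id, Category.comp_id]

section LocalRing

variable [IsLocalRing R]

theorem notMem_asIdeal_closedPoint_iff_isUnit {B : CommRingCat} (q : SpecR R ⟶ Spec B) (b : B) :
    b ∉ (q.base (IsLocalRing.closedPoint R)).asIdeal ↔ IsUnit (Spec.preimage q b) := by
  conv_lhs => rw [← Spec.map_preimage q]
  exact IsLocalRing.notMem_maximalIdeal

theorem range_subset_of_closedPoint_mem {X : Scheme} (s : SpecR R ⟶ X) {U : Set X}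
    (hU : IsOpen U) (hs : s.base (IsLocalRing.closedPoint R) ∈ U) : Set.range s.base ⊆ U := by
  rintro _ ⟨y, rfl⟩
  exact ((IsLocalRing.specializes_closedPoint y).map s.continuous).mem_open hU hs

theorem Pts.range_map_of_isOpenImmersion {X Y : Scheme} (f : X ⟶ SpecR R) (g : Y ⟶ X)
    [IsOpenImmersion g] :
    Set.range (Pts.map g rfl : Pts (g ≫ f) → Pts f) =
      {s | s.1.base (IsLocalRing.closedPoint R) ∈ Set.range g.base} := by
  ext s
  refine ⟨?_, fun hs => ?_⟩
  · rintro ⟨t, rfl⟩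
    exact ⟨t.1.base _, (Scheme.Hom.comp_apply t.1 g _).symm⟩
  · have hsub := range_subset_of_closedPoint_mem s.1 g.isOpenEmbedding.isOpen_range hs
    refine ⟨⟨IsOpenImmersion.lift g s.1 hsub, ?_⟩,
      Subtype.ext (IsOpenImmersion.lift_fac g s.1 hsub)⟩
    rw [← Category.assoc, IsOpenImmersion.lift_fac, s.2]

end LocalRing

namespace PointsTopology

variable [TopologicalSpace R] (T : PointsTopology R)

theorem t2Space_of_isAffine [T2Space R] {Y : Scheme} [IsAffine Y] (h : Y ⟶ SpecR R)
    [LocallyOfFiniteType h] :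
    letI := T.top h ‹_›
    T2Space (Pts h) := by
  obtain ⟨n, g, hg, w⟩ := exists_isClosedImmersion_affineN h
  let _ := T.top h ‹_›
  let _ := T.top (AffineNStr R n) (locallyOfFiniteType_affineNStr n)
  exact ((T.affine_homeo n _).isEmbedding.comp
    (T.closedImmersion_isEmbedding ‹_› _ g w hg)).t2Space

theorem continuous_preimage_apply {B : CommRingCat} (h : Spec B ⟶ SpecR R)
    [LocallyOfFiniteType h] (b : B) :
    letI := T.top h ‹_›
    Continuous fun t : Pts h => Spec.preimage t.1 b := by
  let _ := T.top h ‹_›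
  let _ := T.top (AffineNStr R 1) (locallyOfFiniteType_affineNStr 1)
  let ψ : MvPolynomial (Fin 1) R →+* B := MvPolynomial.eval₂Hom (Spec.preimage h).hom fun _ => b
  have w : Spec.map (CommRingCat.ofHom ψ) ≫ AffineNStr R 1 = h := by
    rw [AffineNStr, ← Spec.map_comp,
      show CommRingCat.ofHom (algebraMap R (MvPolynomial (Fin 1) R)) ≫ CommRingCat.ofHom ψ
        = Spec.preimage h from CommRingCat.hom_ext <| RingHom.ext fun r => by
          simp [ψ, MvPolynomial.algebraMap_eq], Spec.map_preimage]
  have heval : (fun t : Pts h => Spec.preimage t.1 b)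
      = (fun v => v 0) ∘ affineCoords R 1 ∘ Pts.map (Spec.map (CommRingCat.ofHom ψ)) w := by
    funext t
    change _ = Spec.preimage (t.1 ≫ Spec.map (CommRingCat.ofHom ψ)) (MvPolynomial.X 0)
    rw [show t.1 ≫ Spec.map (CommRingCat.ofHom ψ) =
        Spec.map (CommRingCat.ofHom ψ ≫ Spec.preimage t.1) by
      rw [Spec.map_comp, Spec.map_preimage], Spec.preimage_map]
    simp [ψ]
  rw [heval]
  exact (continuous_apply 0).comp
    ((T.affine_homeo 1 _).continuous.comp (T.continuous_map ‹_› _ _ w))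

variable [IsLocalRing R]

theorem isClosed_setOf_closedPoint_mem (hclosed : IsClosed {x : R | IsUnit x})
    {B : CommRingCat} (h : Spec B ⟶ SpecR R) [LocallyOfFiniteType h]
    {W : Set (PrimeSpectrum B)} (hWo : IsOpen W) (hWc : IsCompact W) :
    letI := T.top h ‹_›
    IsClosed {t : Pts h | t.1.base (IsLocalRing.closedPoint R) ∈ W} := by
  let _ := T.top h ‹_›
  obtain ⟨bs, rfl⟩ := PrimeSpectrum.isCompact_isOpen_iff.mp ⟨hWc, hWo⟩
  have hW : {t : Pts h | t.1.base (IsLocalRing.closedPoint R) ∈ (PrimeSpectrum.zeroLocus bs)ᶜ}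
      = ⋃ b ∈ bs, (fun t : Pts h => Spec.preimage t.1 b) ⁻¹' {x : R | IsUnit x} := by
    ext t
    change ¬ ((bs : Set B) ⊆ _) ↔ _
    simp only [Set.not_subset, SetLike.mem_coe, notMem_asIdeal_closedPoint_iff_isUnit,
      Set.mem_iUnion, Set.mem_preimage, Set.mem_ofPred_eq, exists_prop]
  rw [hW]
  exact isClosed_biUnion_finset fun b _ => hclosed.preimage (T.continuous_preimage_apply h b)

theorem isOpen_setOf_closedPoint_mem_range {X Y : Scheme} (f : X ⟶ SpecR R)
    [LocallyOfFiniteType f] (g : Y ⟶ X) [IsOpenImmersion g] :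
    letI := T.top f ‹_›
    IsOpen {s : Pts f | s.1.base (IsLocalRing.closedPoint R) ∈ Set.range g.base} := by
  let _ := T.top f ‹_›
  let _ := T.top (g ≫ f) inferInstance
  rw [← Pts.range_map_of_isOpenImmersion]
  exact (T.openImmersion_isOpenEmbedding inferInstance ‹_› g rfl ‹_›).isOpen_range

theorem isOpen_setOf_closedPoint_mem_range_diff (hclosed : IsClosed {x : R | IsUnit x})
    {X U : Scheme} [QuasiSeparatedSpace X] [CompactSpace U] (f : X ⟶ SpecR R)
    [LocallyOfFiniteType f] (g : U ⟶ X) [IsOpenImmersion g] {B : CommRingCat}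
    (g' : Spec B ⟶ X) [IsOpenImmersion g'] :
    letI := T.top f ‹_›
    IsOpen {s : Pts f |
      s.1.base (IsLocalRing.closedPoint R) ∈ Set.range g'.base \ Set.range g.base} := by
  let _ := T.top f ‹_›
  let _ := T.top (g' ≫ f) inferInstance
  have hg' := T.openImmersion_isOpenEmbedding inferInstance ‹_› g' rfl ‹_›
  rw [hg'.isOpen_iff_preimage_isOpen (by
    rw [Pts.range_map_of_isOpenImmersion]; exact fun s hs => hs.1)]
  have hW : IsCompact (g'.base ⁻¹' Set.range g.base) :=
    QuasiCompact.isCompact_preimage _ g.isOpenEmbedding.isOpen_range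
      (isCompact_range g.continuous)
  convert (T.isClosed_setOf_closedPoint_mem hclosed (g' ≫ f)
    (g.isOpenEmbedding.isOpen_range.preimage g'.continuous) hW).isOpen_compl using 1
  ext u
  exact and_iff_right ⟨_, rfl⟩

theorem disjoint_nhds_of_closedPoint_mem_range [T2Space R] {X U : Scheme} [IsAffine U]
    (f : X ⟶ SpecR R) [LocallyOfFiniteType f] (g : U ⟶ X) [IsOpenImmersion g] {s t : Pts f}
    (hst : s ≠ t) (hs : s.1.base (IsLocalRing.closedPoint R) ∈ Set.range g.base)
    (ht : t.1.base (IsLocalRing.closedPoint R) ∈ Set.range g.base) :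
    letI := T.top f ‹_›
    Disjoint (𝓝 s) (𝓝 t) := by
  let _ := T.top f ‹_›
  let _ := T.top (g ≫ f) inferInstance
  have := T.t2Space_of_isAffine (g ≫ f)
  have hg := T.openImmersion_isOpenEmbedding inferInstance ‹_› g rfl ‹_›
  obtain ⟨s', rfl⟩ : s ∈ Set.range (Pts.map g rfl) := by rwa [Pts.range_map_of_isOpenImmersion]
  obtain ⟨t', rfl⟩ : t ∈ Set.range (Pts.map g rfl) := by rwa [Pts.range_map_of_isOpenImmersion]
  rw [← hg.map_nhds_eq, ← hg.map_nhds_eq, Filter.disjoint_map hg.injective]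
  exact disjoint_nhds_nhds.mpr (ne_of_apply_ne _ hst)

end PointsTopology

theorem statement_14_general (R : Type) [CommRing R] [TopologicalSpace R]
    [IsLocalRing R] [T2Space R]
    (hclosed : IsClosed {x : R | IsUnit x})
    (T : PointsTopology R)
    {X : Scheme} (f : X ⟶ SpecR R) (hf : LocallyOfFiniteType f) [QuasiSeparated f] :
    letI := T.top f hf
    T2Space (Pts f) := by
  let _ := T.top f hf
  have : QuasiSeparatedSpace X := quasiSeparatedSpace_of_quasiSeparated f
  refine t2Space_iff_disjoint_nhds.mpr fun s t hst => ?_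
  let 𝒰 := X.affineOpenCover
  let m := IsLocalRing.closedPoint R
  obtain ⟨i, hs⟩ : ∃ i, s.1.base m ∈ Set.range (𝒰.f i).base := ⟨_, 𝒰.covers _⟩
  obtain ⟨j, ht⟩ : ∃ j, t.1.base m ∈ Set.range (𝒰.f j).base := ⟨_, 𝒰.covers _⟩
  by_cases hti : t.1.base m ∈ Set.range (𝒰.f i).base
  · exact T.disjoint_nhds_of_closedPoint_mem_range f (𝒰.f i) hst hs hti
  · refine Filter.disjoint_of_disjoint_of_mem ?_
      ((T.isOpen_setOf_closedPoint_mem_range f (𝒰.f i)).mem_nhds hs)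
      ((T.isOpen_setOf_closedPoint_mem_range_diff hclosed f (𝒰.f i) (𝒰.f j)).mem_nhds
        ⟨ht, hti⟩)
    exact Set.disjoint_left.mpr fun _ h h' => h'.2 h

/-- over a Hausdorff local topological ring `R` with `R^×` open, closed, and a
topological group in the subspace topology, for every quasi-separated locally of finite type
`R`-scheme `X`, the space `X(R)` is Hausdorff. -/
theorem statement_14 (R : Type) [CommRing R] [TopologicalSpace R] [IsTopologicalRing R]
    [IsLocalRing R] [T2Space R]
    (hunit : IsOpen {x : R | IsUnit x})
    (hinv : ContinuousOn (fun x : R => Ring.inverse x) {x : R | IsUnit x})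
    (hclosed : IsClosed {x : R | IsUnit x})
    (T : PointsTopology R)
    {X : Scheme} (f : X ⟶ SpecR R) (hf : LocallyOfFiniteType f) [QuasiSeparated f] :
    letI := T.top f hf
    T2Space (Pts f) :=
  statement_14_general R hclosed T f hf

end
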